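/- Let A ∈ R^{m×n} satisfy the (s+s')-restricted isometry property with constant δ_{s+s'} ∈ (0,1). Then for any disjoint index sets S, T ⊆ {1,…,n} with |S| ≤ s and |T| ≤ s', the spectral norm of A_S^T A_T satisfies ‖A_S^T A_T‖₂ ≤ δ_{s+s'}. -/

import Mathlib

/-!
Polarization: for `x`, `y` with disjoint supports, `x ± y` are `(s + s')`-sparse with
`‖x ± y‖² = ‖x‖² + ‖y‖²`, so `4 ⟪Ax, Ay⟫ = ‖A(x + y)‖² - ‖A(x - y)‖² ≤ 2δ (‖x‖² + ‖y‖²)`; rescaling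
`x`, `y` to equal norms gives `⟪Ax, Ay⟫ ≤ δ ‖x‖ ‖y‖`. For `u = A_Sᵀ A_T v` this yields
`‖u‖² = ⟪A_S u, A_T v⟫ ≤ δ ‖u‖ ‖v‖`.
-/

noncomputable def eucNorm {ι : Type*} [Fintype ι] (v : ι → ℝ) : ℝ := Real.sqrt (∑ i, v i ^ 2)

def Sparse {n : ℕ} (s : ℕ) (x : Fin n → ℝ) : Prop :=
  ∃ S : Finset (Fin n), S.card ≤ s ∧ ∀ i ∉ S, x i = 0

def RIP {m n : ℕ} (A : Matrix (Fin m) (Fin n) ℝ) (s : ℕ) (δ : ℝ) : Prop :=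
  ∀ x : Fin n → ℝ, Sparse s x →
    (1 - δ) * (eucNorm x)^2 ≤ (eucNorm (A.mulVec x))^2 ∧
      (eucNorm (A.mulVec x))^2 ≤ (1 + δ) * (eucNorm x)^2

def colSub {m n : ℕ} (A : Matrix (Fin m) (Fin n) ℝ) (S : Finset (Fin n)) :
    Matrix (Fin m) S ℝ := fun i j => A i (j : Fin n)

open Finset Matrix

section EucNorm

variable {ι : Type*} [Fintype ι]

lemma eucNorm_nonneg (v : ι → ℝ) : 0 ≤ eucNorm v := Real.sqrt_nonneg _

lemma eucNorm_sq (v : ι → ℝ) : eucNorm v ^ 2 = v ⬝ᵥ v := by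
  rw [eucNorm, Real.sq_sqrt (by positivity), dotProduct]
  simp only [sq]

lemma eucNorm_eq_zero {v : ι → ℝ} : eucNorm v = 0 ↔ v = 0 := by
  rw [← sq_eq_zero_iff, eucNorm_sq, dotProduct_self_eq_zero]

end EucNorm

section ExtendByZero

variable {ι R : Type*} [DecidableEq ι] [Zero R]

def extendByZero (S : Finset ι) (w : S → R) : ι → R :=
  fun i => if h : i ∈ S then w ⟨i, h⟩ else 0

lemma extendByZero_of_notMem {S : Finset ι} (w : S → R) {i : ι} (hi : i ∉ S) :
    extendByZero S w i = 0 :=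
  dif_neg hi

lemma sum_extendByZero {M : Type*} [AddCommMonoid M] [Fintype ι] (S : Finset ι) (w : S → R)
    (g : ι → R → M) (hg : ∀ i, g i 0 = 0) :
    ∑ i, g i (extendByZero S w i) = ∑ j : S, g j (w j) := by
  rw [← sum_subset (subset_univ S) fun i _ hi => by rw [extendByZero_of_notMem w hi, hg],
    ← sum_coe_sort]
  simp [extendByZero]

lemma eucNorm_extendByZero [Fintype ι] (S : Finset ι) (w : S → ℝ) :
    eucNorm (extendByZero S w) = eucNorm w := by
  rw [eucNorm, eucNorm, sum_extendByZero S w (fun _ t => t ^ 2) fun _ => zero_pow two_ne_zero]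

lemma mulVec_extendByZero {m n : ℕ} (A : Matrix (Fin m) (Fin n) ℝ) (S : Finset (Fin n))
    (w : S → ℝ) : A *ᵥ extendByZero S w = colSub A S *ᵥ w := by
  ext k
  exact sum_extendByZero S w (fun i t => A k i * t) fun _ => mul_zero _

end ExtendByZero

lemma dotProduct_eq_zero_of_disjoint {ι : Type*} [Fintype ι] {S T : Finset ι} (hST : Disjoint S T)
    {x y : ι → ℝ} (hx : ∀ i ∉ S, x i = 0) (hy : ∀ i ∉ T, y i = 0) : x ⬝ᵥ y = 0 := by
  refine sum_eq_zero fun i _ => ?_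
  by_cases hi : i ∈ S
  · rw [hy i (disjoint_left.mp hST hi), mul_zero]
  · rw [hx i hi, zero_mul]

namespace RIP

variable {m n r : ℕ} {A : Matrix (Fin m) (Fin n) ℝ} {δ : ℝ}

lemma dotProduct_mulVec_le_of_orthogonal (hA : RIP A r δ) {x y : Fin n → ℝ}
    (hxy : x ⬝ᵥ y = 0) (hadd : Sparse r (x + y)) (hsub : Sparse r (x - y)) :
    A *ᵥ x ⬝ᵥ A *ᵥ y ≤ δ / 2 * (x ⬝ᵥ x + y ⬝ᵥ y) := by
  have hyx : y ⬝ᵥ x = 0 := by rw [dotProduct_comm, hxy]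
  have hupper := (hA _ hadd).2
  have hlower := (hA _ hsub).1
  simp only [eucNorm_sq, mulVec_add, mulVec_sub, add_dotProduct, dotProduct_add,
    sub_dotProduct, dotProduct_sub, hxy, hyx, dotProduct_comm (A *ᵥ y) (A *ᵥ x)] at hupper hlower
  linarith

lemma dotProduct_mulVec_le (hA : RIP A r δ) {S T : Finset (Fin n)} (hST : Disjoint S T)
    (hcard : (S ∪ T).card ≤ r) {x y : Fin n → ℝ} (hx : ∀ i ∉ S, x i = 0)
    (hy : ∀ i ∉ T, y i = 0) :
    A *ᵥ x ⬝ᵥ A *ᵥ y ≤ δ * eucNorm x * eucNorm y := by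
  rcases (eucNorm_nonneg x).eq_or_lt with ha | ha
  · rw [eq_comm, eucNorm_eq_zero] at ha
    simp [ha, eucNorm]
  rcases (eucNorm_nonneg y).eq_or_lt with hb | hb
  · rw [eq_comm, eucNorm_eq_zero] at hb
    simp [hb, eucNorm]
  set a := eucNorm x
  set b := eucNorm y
  have hsparse : ∀ c : ℝ, Sparse r (b • x + c • a • y) := fun c =>
    ⟨S ∪ T, hcard, fun i hi => by
      rw [mem_union, not_or] at hi
      simp [hx i hi.1, hy i hi.2]⟩
  -- rescaling to `‖b • x‖ = ‖a • y‖ = a * b` turns `(‖·‖² + ‖·‖²) / 2` into `‖x‖ ‖y‖`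
  have key := hA.dotProduct_mulVec_le_of_orthogonal (x := b • x) (y := a • y)
    (by simp [dotProduct_eq_zero_of_disjoint hST hx hy]) (by simpa using hsparse 1)
    (by simpa [sub_eq_add_neg] using hsparse (-1))
  simp only [mulVec_smul, smul_dotProduct, dotProduct_smul, smul_eq_mul, ← eucNorm_sq] at key
  have hab : 0 < a * b := mul_pos ha hb
  nlinarith

end RIP

/-- `‖A_Sᵀ A_T‖₂ ≤ δ_{s+s'}` for disjoint `S`, `T`. -/
theorem stmt3 {m n s s' : ℕ} (A : Matrix (Fin m) (Fin n) ℝ) (δ : ℝ)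
    (hδ : δ ∈ Set.Ioo (0:ℝ) 1) (hRIP : RIP A (s + s') δ)
    (S T : Finset (Fin n)) (hdisj : Disjoint S T)
    (hS : S.card ≤ s) (hT : T.card ≤ s') :
    ∀ v : T → ℝ, eucNorm (((colSub A S).transpose * colSub A T).mulVec v) ≤ δ * eucNorm v := by
  intro v
  set u := ((colSub A S)ᵀ * colSub A T) *ᵥ v
  have hbound : eucNorm u ^ 2 ≤ δ * eucNorm u * eucNorm v :=
    calc eucNorm u ^ 2 = u ⬝ᵥ (colSub A S)ᵀ *ᵥ (colSub A T *ᵥ v) := by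
          rw [eucNorm_sq, mulVec_mulVec]
      _ = colSub A S *ᵥ u ⬝ᵥ colSub A T *ᵥ v := by
          rw [dotProduct_mulVec, vecMul_transpose]
      _ = A *ᵥ extendByZero S u ⬝ᵥ A *ᵥ extendByZero T v := by
          rw [mulVec_extendByZero, mulVec_extendByZero]
      _ ≤ δ * eucNorm (extendByZero S u) * eucNorm (extendByZero T v) :=
          hRIP.dotProduct_mulVec_le hdisj ((card_union_le S T).trans (add_le_add hS hT))
            (fun _ => extendByZero_of_notMem u) (fun _ => extendByZero_of_notMem v)
      _ = δ * eucNorm u * eucNorm v := by rw [eucNorm_extendByZero, eucNorm_extendByZero]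
  nlinarith [eucNorm_nonneg u, mul_nonneg hδ.1.le (eucNorm_nonneg v)]
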